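/- Extensionality holds for well-founded extensional apgs: two well-founded extensional apgs X and Y (on types in a fixed universe) are isomorphic as pointed graphs if and only if for every well-founded extensional apg Z (on a type in the same universe), Z ⋿ X ↔ Z ⋿ Y. -/

import Mathlib

universe u v

/-- A relation is (inductively) well-founded if every inductive subset is the whole type:
`S` is inductive when `x ∈ S` whenever every child of `x` is in `S`. -/
def IsWFRel {X : Type u} (r : X → X → Prop) : Prop :=
  ∀ S : Set X, (∀ x, (∀ y, r y x → y ∈ S) → x ∈ S) → S = Set.univ

/-- A relation is extensional if nodes with the same children are equal. -/
def IsExtRel {X : Type u} (r : X → X → Prop) : Prop :=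
  ∀ x y, (∀ z, r z x ↔ r z y) → x = y

/-- `Below r x` is the full subgraph `X/x` of nodes admitting a (possibly empty) path to `x`. -/
def Below {X : Type u} (r : X → X → Prop) (x : X) : Type u :=
  {z : X // Relation.ReflTransGen r z x}

/-- The induced relation on the subgraph `X/x`. -/
def belowRel {X : Type u} (r : X → X → Prop) (x : X) :
    Below r x → Below r x → Prop :=
  fun a b => r a.1 b.1

/-- The root of the pointed subgraph `X/x`. -/
def belowRoot {X : Type u} (r : X → X → Prop) (x : X) : Below r x :=
  ⟨x, Relation.ReflTransGen.refl⟩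

/-- Isomorphism of pointed graphs: a relation-preserving-and-reflecting bijection
taking the first distinguished point to the second. -/
def PIso {X : Type u} {Y : Type v} (rX : X → X → Prop) (rY : Y → Y → Prop)
    (x : X) (y : Y) : Prop :=
  ∃ f : X ≃ Y, (∀ a b, rX a b ↔ rY (f a) (f b)) ∧ f x = y

/-- A simulation of graphs. -/
def IsSimulation {X : Type u} {Y : Type v} (rX : X → X → Prop)
    (rY : Y → Y → Prop) (f : X → Y) : Prop :=
  (∀ a b, rX a b → rY (f a) (f b)) ∧
  (∀ x y, rY y (f x) → ∃ a, rX a x ∧ f a = y)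

/-- A bisimulation between graphs. -/
def IsBisimulation {X : Type u} {Y : Type v} (rX : X → X → Prop)
    (rY : Y → Y → Prop) (R : X → Y → Prop) : Prop :=
  ∀ x y, R x y →
    (∀ x', rX x' x → ∃ y', rY y' y ∧ R x' y') ∧
    (∀ y', rY y' y → ∃ x', rX x' x ∧ R x' y')

/-- A bi-entire relation. -/
def BiEntire {X : Type u} {Y : Type v} (R : X → Y → Prop) : Prop :=
  (∀ x, ∃ y, R x y) ∧ (∀ y, ∃ x, R x y)

/-- A well-founded extensional accessible pointed graph ("apg") on a type in universe `u`. -/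
structure WEApg : Type (u + 1) where
  carrier : Type u
  rel : carrier → carrier → Prop
  root : carrier
  acc : ∀ x, Relation.ReflTransGen rel x root
  wf : IsWFRel rel
  ext : IsExtRel rel

/-- Isomorphism of (the underlying pointed graphs of) apgs. -/
def WEApg.Iso (X Y : WEApg.{u}) : Prop :=
  PIso X.rel Y.rel X.root Y.root

/-- Membership of the pointed graph `(W, rW, w)` in the pointed graph `(Y, rY, y)`:
`(W, rW, w)` is isomorphic as a pointed graph to `(Y, rY)/z` for some child `z` of `y`. -/
def MemPGAt {W : Type u} {Y : Type v} (rW : W → W → Prop) (w : W)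
    (rY : Y → Y → Prop) (y : Y) : Prop :=
  ∃ z, rY z y ∧ PIso rW (belowRel rY z) w (belowRoot rY z)

/-- `X ⋿ Y` for apgs: `X` is isomorphic as a pointed graph to `Y/y` for some member
(child of the root) `y` of `Y`. -/
def WEApg.Mem (X Y : WEApg.{u}) : Prop :=
  MemPGAt X.rel X.root Y.rel Y.root

/-!
Relating `x` to `y` when `X/x ≅ Y/y` gives a bisimulation between `X` and `Y`, and the hypothesis
on members says exactly that adjoining the pair of roots keeps it a bisimulation. Between
well-founded extensional graphs a bisimulation is the graph of a partial injection (induction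
on the well-founded side, then extensionality on the other), and by accessibility this one is
defined everywhere and onto, hence it is an isomorphism of pointed graphs.
-/

section Graph

variable {X Y Z : Type*} {rX : X → X → Prop} {rY : Y → Y → Prop} {rZ : Z → Z → Prop}

theorem PIso.refl (r : X → X → Prop) (x : X) : PIso r r x x :=
  ⟨Equiv.refl X, fun _ _ => Iff.rfl, rfl⟩

theorem PIso.symm {x : X} {y : Y} : PIso rX rY x y → PIso rY rX y x := by
  rintro ⟨f, hf, rfl⟩
  exact ⟨f.symm, fun a b => by simpa using (hf (f.symm a) (f.symm b)).symm, f.symm_apply_apply x⟩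

theorem PIso.trans {x : X} {y : Y} {z : Z} :
    PIso rX rY x y → PIso rY rZ y z → PIso rX rZ x z := by
  rintro ⟨f, hf, rfl⟩ ⟨g, hg, rfl⟩
  exact ⟨f.trans g, fun a b => (hf a b).trans (hg (f a) (f b)), rfl⟩

theorem isWFRel_iff_wellFounded {r : X → X → Prop} : IsWFRel r ↔ WellFounded r :=
  ⟨fun h => ⟨Set.eq_univ_iff_forall.1 (h {x | Acc r x} fun x => Acc.intro x)⟩,
    fun h _ hS => Set.eq_univ_of_forall fun x => h.induction x hS⟩

theorem reflTransGen_belowRel {r : X → X → Prop} {x : X} {a b : Below r x}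
    (h : Relation.ReflTransGen r a.1 b.1) : Relation.ReflTransGen (belowRel r x) a b := by
  obtain ⟨a, ha⟩ := a
  change Relation.ReflTransGen r a b.1 at h
  induction h using Relation.ReflTransGen.head_induction_on with
  | refl => exact .refl
  | head hac hcb ih => exact .head (show belowRel r x ⟨_, ha⟩ ⟨_, hcb.trans b.2⟩ from hac) (ih _)

theorem IsWFRel.belowRel {r : X → X → Prop} (h : IsWFRel r) (x : X) :
    IsWFRel (belowRel r x) :=
  isWFRel_iff_wellFounded.2 (InvImage.wf Subtype.val (isWFRel_iff_wellFounded.1 h))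

theorem IsExtRel.belowRel {r : X → X → Prop} (h : IsExtRel r) (x : X) :
    IsExtRel (belowRel r x) := fun a b hab =>
  Subtype.ext <| h a.1 b.1 fun z =>
    ⟨fun hz => (hab ⟨z, .head hz a.2⟩).1 hz, fun hz => (hab ⟨z, .head hz b.2⟩).2 hz⟩

theorem pIso_belowRel_belowRel {r : X → X → Prop} {x : X} (b : Below r x) :
    PIso (belowRel (belowRel r x) b) (belowRel r b.1) (belowRoot _ b) (belowRoot r b.1) :=
  ⟨⟨fun z => ⟨z.1.1, z.2.lift Subtype.val fun _ _ h => h⟩,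
    fun w => ⟨⟨w.1, w.2.trans b.2⟩, reflTransGen_belowRel w.2⟩, fun _ => rfl, fun _ => rfl⟩,
    fun _ _ => Iff.rfl, rfl⟩

def BelowIso (rX : X → X → Prop) (rY : Y → Y → Prop) (x : X) (y : Y) : Prop :=
  PIso (belowRel rX x) (belowRel rY y) (belowRoot rX x) (belowRoot rY y)

theorem BelowIso.symm {x : X} {y : Y} (h : BelowIso rX rY x y) : BelowIso rY rX y x :=
  PIso.symm h

theorem belowIso_of_rel_iff (f : X ≃ Y) (hf : ∀ a b, rX a b ↔ rY (f a) (f b)) (x : X) :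
    BelowIso rX rY x (f x) := by
  refine ⟨f.subtypeEquiv fun z => ⟨fun hz => hz.lift f fun a b => (hf a b).1, fun hz => ?_⟩,
    fun a b => hf a.1 b.1, rfl⟩
  have hz' : Relation.ReflTransGen rX (f.symm (f z)) (f.symm (f x)) :=
    hz.lift f.symm fun a b hab => (hf _ _).2 (by simpa using hab)
  simpa using hz'

theorem BelowIso.exists_child {x : X} {y : Y} (h : BelowIso rX rY x y) {x' : X}
    (hx' : rX x' x) : ∃ y', rY y' y ∧ BelowIso rX rY x' y' := by
  obtain ⟨f, hf, hroot⟩ := h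
  let a : Below rX x := ⟨x', .single hx'⟩
  refine ⟨(f a).1, ?_, ?_⟩
  · have ha := (hf a (belowRoot rX x)).1 hx'
    rwa [hroot] at ha
  · exact (pIso_belowRel_belowRel a).symm.trans
      ((belowIso_of_rel_iff f hf a).trans (pIso_belowRel_belowRel (f a)))

theorem isBisimulation_belowIso : IsBisimulation rX rY (BelowIso rX rY) := fun _ _ h =>
  ⟨fun _ => h.exists_child,
    fun _ hy' => (h.symm.exists_child hy').imp fun _ => And.imp_right BelowIso.symm⟩

namespace IsBisimulation

variable {R : X → Y → Prop}

theorem flip (hR : IsBisimulation rX rY R) : IsBisimulation rY rX (flip R) :=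
  fun x y h => ⟨(hR y x h).2, (hR y x h).1⟩

theorem adjoin (hR : IsBisimulation rX rY R) {x₀ : X} {y₀ : Y}
    (hx : ∀ x, rX x x₀ → ∃ y, rY y y₀ ∧ R x y) (hy : ∀ y, rY y y₀ → ∃ x, rX x x₀ ∧ R x y) :
    IsBisimulation rX rY fun x y => R x y ∨ x = x₀ ∧ y = y₀ := by
  rintro x y (hxy | ⟨rfl, rfl⟩)
  · exact ⟨fun x' hx' => ((hR x y hxy).1 x' hx').imp fun _ => And.imp_right Or.inl,
      fun y' hy' => ((hR x y hxy).2 y' hy').imp fun _ => And.imp_right Or.inl⟩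
  · exact ⟨fun x' hx' => (hx x' hx').imp fun _ => And.imp_right Or.inl,
      fun y' hy' => (hy y' hy').imp fun _ => And.imp_right Or.inl⟩

theorem right_unique (hR : IsBisimulation rX rY R) (wf : WellFounded rX) (ext : IsExtRel rY)
    {x : X} {y y' : Y} (h : R x y) (h' : R x y') : y = y' := by
  induction x using wf.induction generalizing y y' with
  | _ x ih =>
    have sub : ∀ {y y'}, R x y → R x y' → ∀ z, rY z y → rY z y' := fun h h' z hz => by
      obtain ⟨x', hx', hxz⟩ := (hR _ _ h).2 z hz
      obtain ⟨z', hz', hxz'⟩ := (hR _ _ h').1 x' hx'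
      exact ih x' hx' hxz hxz' ▸ hz'
    exact ext y y' fun z => ⟨sub h h' z, sub h' h z⟩

theorem left_unique (hR : IsBisimulation rX rY R) (wf : WellFounded rY) (ext : IsExtRel rX)
    {x x' : X} {y : Y} (h : R x y) (h' : R x' y) : x = x' :=
  hR.flip.right_unique wf ext h h'

theorem rel_of_rel (hR : IsBisimulation rX rY R) (wf : WellFounded rX) (ext : IsExtRel rY)
    {x x' : X} {y y' : Y} (h : R x y) (h' : R x' y') (hx : rX x x') : rY y y' := by
  obtain ⟨y'', hy'', h''⟩ := (hR _ _ h').1 x hx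
  exact hR.right_unique wf ext h h'' ▸ hy''

theorem exists_rel_of_reflTransGen (hR : IsBisimulation rX rY R) {x₀ : X} {y₀ : Y}
    (h₀ : R x₀ y₀) {x : X} (hx : Relation.ReflTransGen rX x x₀) : ∃ y, R x y := by
  induction hx using Relation.ReflTransGen.head_induction_on with
  | refl => exact ⟨y₀, h₀⟩
  | head hxz _ ih =>
    obtain ⟨y, hy⟩ := ih
    obtain ⟨y', -, hy'⟩ := (hR _ _ hy).1 _ hxz
    exact ⟨y', hy'⟩

theorem biEntire (hR : IsBisimulation rX rY R) {x₀ : X} {y₀ : Y} (h₀ : R x₀ y₀)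
    (hX : ∀ x, Relation.ReflTransGen rX x x₀) (hY : ∀ y, Relation.ReflTransGen rY y y₀) :
    BiEntire R :=
  ⟨fun x => hR.exists_rel_of_reflTransGen h₀ (hX x),
    fun y => hR.flip.exists_rel_of_reflTransGen h₀ (hY y)⟩

theorem pIso (hR : IsBisimulation rX rY R) (wfX : WellFounded rX) (wfY : WellFounded rY)
    (extX : IsExtRel rX) (extY : IsExtRel rY) (hE : BiEntire R) {x : X} {y : Y} (h : R x y) :
    PIso rX rY x y := by
  choose f hf using hE.1
  choose g hg using hE.2
  exact ⟨⟨f, g, fun x => hR.left_unique wfY extX (hg (f x)) (hf x),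
      fun y => hR.right_unique wfX extY (hf (g y)) (hg y)⟩,
    fun a b => ⟨hR.rel_of_rel wfX extY (hf a) (hf b), hR.flip.rel_of_rel wfY extX (hf a) (hf b)⟩,
    hR.right_unique wfX extY (hf x) h⟩

end IsBisimulation

end Graph

namespace WEApg

def below (X : WEApg.{u}) (x : X.carrier) : WEApg.{u} where
  carrier := Below X.rel x
  rel := belowRel X.rel x
  root := belowRoot X.rel x
  acc a := reflTransGen_belowRel a.2
  wf := X.wf.belowRel x
  ext := X.ext.belowRel x

theorem below_mem (X : WEApg.{u}) {x : X.carrier} (hx : X.rel x X.root) : (X.below x).Mem X :=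
  ⟨x, hx, PIso.refl _ _⟩

theorem Iso.symm {X Y : WEApg.{u}} (h : X.Iso Y) : Y.Iso X :=
  PIso.symm h

theorem Mem.of_iso {Z X Y : WEApg.{u}} (hm : Z.Mem X) (h : X.Iso Y) : Z.Mem Y := by
  obtain ⟨f, hf, hroot⟩ := h
  obtain ⟨x, hx, hZ⟩ := hm
  refine ⟨f x, ?_, hZ.trans (belowIso_of_rel_iff f hf x)⟩
  rw [← hroot]
  exact (hf x X.root).1 hx

end WEApg

/-- Extensionality for well-founded extensional apgs: `X` and `Y` are isomorphic as
pointed graphs iff they have the same members. -/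
theorem weapg_extensionality (X Y : WEApg.{u}) :
    X.Iso Y ↔ ∀ Z : WEApg.{u}, (Z.Mem X ↔ Z.Mem Y) := by
  refine ⟨fun h Z => ⟨fun hm => hm.of_iso h, fun hm => hm.of_iso h.symm⟩, fun H => ?_⟩
  have hR := isBisimulation_belowIso.adjoin (fun x hx => (H _).1 (X.below_mem hx))
    (fun y hy => ((H _).2 (Y.below_mem hy)).imp fun _ => And.imp_right BelowIso.symm)
  have hroots : BelowIso X.rel Y.rel X.root Y.root ∨ X.root = X.root ∧ Y.root = Y.root :=
    .inr ⟨rfl, rfl⟩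
  exact hR.pIso (isWFRel_iff_wellFounded.1 X.wf) (isWFRel_iff_wellFounded.1 Y.wf) X.ext Y.ext
    (hR.biEntire hroots X.acc Y.acc) hroots
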